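/- arXiv:1210.7515 — 3 statements merged into one kernel-verified Lean document; each statement's English description precedes it below -/
import Mathlib

section
/- Let q ≥ 3 be an odd integer and let n ≥ 2. There exists an (n,2)_q flash code that guarantees at least t = (n−1)(q−1) + ⌊(q−1)/2⌋ writes before a block erasure is required. -/
/-- `IsFlashCode D E` says that the pair of maps `(D, E)` forms an `(n,k)_q` flash code:
the all-zero cell-state vector decodes to the all-zero information vector, and whenever
the encoder succeeds, cell levels do not decrease, the written bit flips, and all other
bits are unchanged. -/
structure IsFlashCode {n k q : ℕ}
    (D : (Fin n → Fin q) → (Fin k → Bool))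
    (E : Fin k → (Fin n → Fin q) → Option (Fin n → Fin q)) : Prop where
  init : ∀ x : Fin n → Fin q, (∀ j, (x j : ℕ) = 0) → D x = fun _ => false
  mono : ∀ i x y, E i x = some y → ∀ j, x j ≤ y j
  flip : ∀ i x y, E i x = some y → D y i = ! D x i
  keep : ∀ i x y, E i x = some y → ∀ j, j ≠ i → D y j = D x j

/-- `CanWrite E x l` means the sequence of bit-writes `l` can be performed starting from
cell-state vector `x`, i.e. iteratively applying the encoder never produces `none`. -/
def CanWrite {n k q : ℕ} (E : Fin k → (Fin n → Fin q) → Option (Fin n → Fin q)) :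
    (Fin n → Fin q) → List (Fin k) → Prop
  | _, [] => True
  | x, i :: l => ∃ y, E i x = some y ∧ CanWrite E y l

/-- The code guarantees `t` writes: every sequence of at most `t` bit-writes, starting from
the all-zero cell-state vector, is accommodated without a block erasure. -/
def Guarantees {n k q : ℕ} (E : Fin k → (Fin n → Fin q) → Option (Fin n → Fin q))
    (t : ℕ) : Prop :=
  ∀ x : Fin n → Fin q, (∀ j, (x j : ℕ) = 0) →
    ∀ l : List (Fin k), l.length ≤ t → CanWrite E x l

/-!
Cells are raised from both ends of the block: bit 0 is the parity of the leftmost non-full cell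
and bit 1 the parity of the rightmost one, so while two non-full cells remain every write costs a
single level. Since `q` is odd, a full cell has even level `q - 1`, and moving on to the next
(empty) cell flips the parity as required. Once only one non-full cell is left, its level mod 4
stores both bits: writing bit 1 costs two levels and bit 0 one or three, so half of the remaining
free levels are still available as writes. Hence the number of free levels minus `(q - 1) / 2`,
resp. half the free levels in the last phase, never drops by more than one per write.
-/

open Finset Function

section FlashCode

variable {n k q : ℕ}

def IsWrite (D : (Fin n → Fin q) → Fin k → Bool) (i : Fin k) (x y : Fin n → Fin q) : Prop :=
  x ≤ y ∧ D y i = !D x i ∧ ∀ j, j ≠ i → D y j = D x j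

theorem canWrite_of_length_le {E : Fin k → (Fin n → Fin q) → Option (Fin n → Fin q)}
    (W : (Fin n → Fin q) → ℕ) (hE : ∀ i x, 0 < W x → ∃ y, E i x = some y ∧ W x ≤ W y + 1) :
    ∀ (l : List (Fin k)) (x : Fin n → Fin q), l.length ≤ W x → CanWrite E x l
  | [], _, _ => trivial
  | i :: l, x, hl => by
    obtain ⟨y, hy, hW⟩ := hE i x (by simp at hl; omega)
    exact ⟨y, hy, canWrite_of_length_le W hE l y (by simp at hl; omega)⟩

theorem exists_isFlashCode_guarantees_of_budget (D : (Fin n → Fin q) → Fin k → Bool)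
    (W : (Fin n → Fin q) → ℕ) (t : ℕ) (hD : ∀ x, (∀ j, (x j : ℕ) = 0) → D x = fun _ => false)
    (hW : ∀ x, (∀ j, (x j : ℕ) = 0) → t ≤ W x)
    (hstep : ∀ x i, 0 < W x → ∃ y, IsWrite D i x y ∧ W x ≤ W y + 1) :
    ∃ E, IsFlashCode D E ∧ Guarantees E t := by
  classical
  let E : Fin k → (Fin n → Fin q) → Option (Fin n → Fin q) := fun i x =>
    if h : ∃ y, IsWrite D i x y ∧ W x ≤ W y + 1 then some h.choose else none
  have hE : ∀ {i x y}, E i x = some y → IsWrite D i x y := by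
    intro i x y h
    simp only [E] at h
    split_ifs at h with hex
    exact Option.some_injective _ h ▸ hex.choose_spec.1
  refine ⟨E, ⟨hD, fun i x y h => (hE h).1, fun i x y h => (hE h).2.1,
    fun i x y h => (hE h).2.2⟩, fun x hx l hl => canWrite_of_length_le W ?_ l x ?_⟩
  · intro i x hx
    have hex := hstep x i hx
    exact ⟨hex.choose, dif_pos hex, hex.choose_spec.2⟩
  · exact hl.trans (hW x hx)

theorem isWrite_zero_of_parity {D : (Fin n → Fin q) → Fin 2 → Bool} {x y : Fin n → Fin q}
    {a b a' b' : ℕ} (hx : D x = ![decide (a % 2 = 1), decide (b % 2 = 1)])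
    (hy : D y = ![decide (a' % 2 = 1), decide (b' % 2 = 1)]) (hle : x ≤ y)
    (ha : a' % 2 ≠ a % 2) (hb : b' % 2 = b % 2) : IsWrite D 0 x y := by
  refine ⟨hle, ?_, ?_⟩ <;>
    simp only [hx, hy, Fin.forall_fin_two, Matrix.cons_val_zero, Matrix.cons_val_one,
      ← decide_not, decide_eq_decide] <;>
    omega

theorem isWrite_one_of_parity {D : (Fin n → Fin q) → Fin 2 → Bool} {x y : Fin n → Fin q}
    {a b a' b' : ℕ} (hx : D x = ![decide (a % 2 = 1), decide (b % 2 = 1)])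
    (hy : D y = ![decide (a' % 2 = 1), decide (b' % 2 = 1)]) (hle : x ≤ y)
    (ha : a' % 2 = a % 2) (hb : b' % 2 ≠ b % 2) : IsWrite D 1 x y := by
  refine ⟨hle, ?_, ?_⟩ <;>
    simp only [hx, hy, Fin.forall_fin_two, Matrix.cons_val_zero, Matrix.cons_val_one,
      ← decide_not, decide_eq_decide] <;>
    omega

end FlashCode

namespace TwoBitCode

variable {n q : ℕ}

def nonFull (x : Fin n → Fin q) : Finset (Fin n) := {j | (x j : ℕ) + 1 < q}

-- With no non-full cell left, the block decodes like a last cell of level `q - 1`.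
noncomputable def firstLevel (x : Fin n → Fin q) : ℕ :=
  if h : (nonFull x).Nonempty then x ((nonFull x).min' h) else q - 1

noncomputable def lastLevel (x : Fin n → Fin q) : ℕ :=
  if h : (nonFull x).Nonempty then x ((nonFull x).max' h) else q - 1

noncomputable def decode (x : Fin n → Fin q) : Fin 2 → Bool :=
  ![decide (firstLevel x % 2 = 1),
    if 1 < #(nonFull x) then decide (lastLevel x % 2 = 1) else decide (firstLevel x / 2 % 2 = 1)]

def freeLevels (x : Fin n → Fin q) : ℕ := ∑ j, (q - 1 - (x j : ℕ))

structure IsTwoPointer (x : Fin n → Fin q) (l r : Fin n) : Prop where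
  lt : l < r
  left_nonFull : (x l : ℕ) + 1 < q
  right_nonFull : (x r : ℕ) + 1 < q
  full_of_lt : ∀ j, j < l → (x j : ℕ) + 1 = q
  full_of_gt : ∀ j, r < j → (x j : ℕ) + 1 = q
  zero_of_between : ∀ j, l < j → j < r → (x j : ℕ) = 0

def IsFullExcept (x : Fin n → Fin q) (c : Fin n) : Prop := ∀ j, j ≠ c → (x j : ℕ) + 1 = q

open Classical in
noncomputable def budget (x : Fin n → Fin q) : ℕ :=
  if ∃ l r, IsTwoPointer x l r then freeLevels x - (q - 1) / 2
  else if ∃ c, IsFullExcept x c then freeLevels x / 2 else 0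

variable {x : Fin n → Fin q}

theorem mem_nonFull {j : Fin n} : j ∈ nonFull x ↔ (x j : ℕ) + 1 < q := by
  simp [nonFull]

theorem firstLevel_eq {c : Fin n} (hc : c ∈ nonFull x) (hle : ∀ j ∈ nonFull x, c ≤ j) :
    firstLevel x = x c := by
  have hne : (nonFull x).Nonempty := ⟨c, hc⟩
  rw [firstLevel, dif_pos hne,
    le_antisymm ((nonFull x).min'_le c hc) ((nonFull x).le_min' hne c hle)]

theorem lastLevel_eq {c : Fin n} (hc : c ∈ nonFull x) (hle : ∀ j ∈ nonFull x, j ≤ c) :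
    lastLevel x = x c := by
  have hne : (nonFull x).Nonempty := ⟨c, hc⟩
  rw [lastLevel, dif_pos hne,
    le_antisymm ((nonFull x).max'_le hne c hle) ((nonFull x).le_max' c hc)]

theorem freeLevels_update (x : Fin n → Fin q) (c : Fin n) (v : Fin q) :
    freeLevels (update x c v) + v = freeLevels x + x c := by
  have hsplit : ∀ z : Fin n → Fin q,
      freeLevels z = (q - 1 - z c) + ∑ j ∈ univ.erase c, (q - 1 - (z j : ℕ)) :=
    fun z => (add_sum_erase _ _ (mem_univ c)).symm
  have hrest : ∑ j ∈ univ.erase c, (q - 1 - (update x c v j : ℕ)) =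
      ∑ j ∈ univ.erase c, (q - 1 - (x j : ℕ)) :=
    sum_congr rfl fun j hj => by rw [update_of_ne (ne_of_mem_erase hj)]
  rw [hsplit, hsplit x, hrest, update_self]
  have := v.isLt
  have := (x c).isLt
  omega

namespace IsTwoPointer

variable {l r : Fin n}

theorem decode_eq (h : IsTwoPointer x l r) :
    decode x = ![decide ((x l : ℕ) % 2 = 1), decide ((x r : ℕ) % 2 = 1)] := by
  have hl : l ∈ nonFull x := mem_nonFull.2 h.left_nonFull
  have hr : r ∈ nonFull x := mem_nonFull.2 h.right_nonFull
  have hbetween : ∀ j ∈ nonFull x, l ≤ j ∧ j ≤ r := by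
    intro j hj
    have := mem_nonFull.1 hj
    constructor
    · by_contra hlt
      have := h.full_of_lt j (not_le.1 hlt)
      omega
    · by_contra hgt
      have := h.full_of_gt j (not_le.1 hgt)
      omega
  have hcard : 1 < #(nonFull x) := one_lt_card.2 ⟨l, hl, r, hr, h.lt.ne⟩
  rw [decode, if_pos hcard, firstLevel_eq hl fun j hj => (hbetween j hj).1,
    lastLevel_eq hr fun j hj => (hbetween j hj).2]

theorem not_isFullExcept (h : IsTwoPointer x l r) (c : Fin n) : ¬IsFullExcept x c := by
  intro hc
  rcases eq_or_ne l c with rfl | hl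
  · have := hc r h.lt.ne'
    have := h.right_nonFull
    omega
  · have := hc l hl
    have := h.left_nonFull
    omega

theorem budget_eq (h : IsTwoPointer x l r) : budget x = freeLevels x - (q - 1) / 2 :=
  if_pos ⟨l, r, h⟩

theorem update_left (h : IsTwoPointer x l r) {v : Fin q} (hv : (v : ℕ) + 1 < q) :
    IsTwoPointer (update x l v) l r where
  lt := h.lt
  left_nonFull := by rwa [update_self]
  right_nonFull := by rw [update_of_ne h.lt.ne']; exact h.right_nonFull
  full_of_lt j hj := by rw [update_of_ne hj.ne]; exact h.full_of_lt j hj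
  full_of_gt j hj := by rw [update_of_ne (h.lt.trans hj).ne']; exact h.full_of_gt j hj
  zero_of_between j hj hj' := by rw [update_of_ne hj.ne']; exact h.zero_of_between j hj hj'

theorem update_right (h : IsTwoPointer x l r) {v : Fin q} (hv : (v : ℕ) + 1 < q) :
    IsTwoPointer (update x r v) l r where
  lt := h.lt
  left_nonFull := by rw [update_of_ne h.lt.ne]; exact h.left_nonFull
  right_nonFull := by rwa [update_self]
  full_of_lt j hj := by rw [update_of_ne (hj.trans h.lt).ne]; exact h.full_of_lt j hj
  full_of_gt j hj := by rw [update_of_ne hj.ne']; exact h.full_of_gt j hj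
  zero_of_between j hj hj' := by rw [update_of_ne hj'.ne]; exact h.zero_of_between j hj hj'

theorem fill_left (h : IsTwoPointer x l r) {v : Fin q} (hv : (v : ℕ) + 1 = q) {l' : Fin n}
    (hl' : (l' : ℕ) = l + 1) (hl'r : l' < r) : IsTwoPointer (update x l v) l' r where
  lt := hl'r
  left_nonFull := by
    rw [update_of_ne (by omega)]
    have := h.zero_of_between l' (by omega) hl'r
    have := h.left_nonFull
    omega
  right_nonFull := by rw [update_of_ne h.lt.ne']; exact h.right_nonFull
  full_of_lt j hj := by
    rcases eq_or_ne j l with rfl | hjl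
    · rwa [update_self]
    · rw [update_of_ne hjl]; exact h.full_of_lt j (by omega)
  full_of_gt j hj := by rw [update_of_ne (by omega)]; exact h.full_of_gt j hj
  zero_of_between j hj hj' := by
    rw [update_of_ne (by omega)]; exact h.zero_of_between j (by omega) hj'

theorem fill_right (h : IsTwoPointer x l r) {v : Fin q} (hv : (v : ℕ) + 1 = q) {r' : Fin n}
    (hr' : (r' : ℕ) + 1 = r) (hlr' : l < r') : IsTwoPointer (update x r v) l r' where
  lt := hlr'
  left_nonFull := by rw [update_of_ne h.lt.ne]; exact h.left_nonFull
  right_nonFull := by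
    rw [update_of_ne (by omega)]
    have := h.zero_of_between r' hlr' (by omega)
    have := h.right_nonFull
    omega
  full_of_lt j hj := by rw [update_of_ne (by omega)]; exact h.full_of_lt j hj
  full_of_gt j hj := by
    rcases eq_or_ne j r with rfl | hjr
    · rwa [update_self]
    · rw [update_of_ne hjr]; exact h.full_of_gt j (by omega)
  zero_of_between j hj hj' := by
    rw [update_of_ne (by omega)]; exact h.zero_of_between j hj (by omega)

theorem isFullExcept_update_left (h : IsTwoPointer x l r) (hadj : (r : ℕ) = l + 1) {v : Fin q}
    (hv : (v : ℕ) + 1 = q) : IsFullExcept (update x l v) r := by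
  intro j hj
  rcases eq_or_ne j l with rfl | hjl
  · rwa [update_self]
  · rw [update_of_ne hjl]
    rcases lt_or_gt_of_ne hjl with hlt | hgt
    · exact h.full_of_lt j hlt
    · exact h.full_of_gt j (by omega)

theorem isFullExcept_update_right (h : IsTwoPointer x l r) (hadj : (r : ℕ) = l + 1) {v : Fin q}
    (hv : (v : ℕ) + 1 = q) : IsFullExcept (update x r v) l := by
  intro j hj
  rcases eq_or_ne j r with rfl | hjr
  · rwa [update_self]
  · rw [update_of_ne hjr]
    rcases lt_or_gt_of_ne hj with hlt | hgt
    · exact h.full_of_lt j hlt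
    · exact h.full_of_gt j (by omega)

end IsTwoPointer

namespace IsFullExcept

variable {c : Fin n}

theorem update_same (h : IsFullExcept x c) (v : Fin q) : IsFullExcept (update x c v) c :=
  fun j hj => by rw [update_of_ne hj]; exact h j hj

theorem decode_eq (h : IsFullExcept x c) :
    decode x = ![decide ((x c : ℕ) % 2 = 1), decide ((x c : ℕ) / 2 % 2 = 1)] := by
  have hsub : nonFull x ⊆ {c} := fun j hj => mem_singleton.2 <| by
    by_contra hjc
    have := h j hjc
    have := mem_nonFull.1 hj
    omega
  have hcard : ¬1 < #(nonFull x) := not_lt.2 ((card_le_card hsub).trans (card_singleton c).le)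
  have hfirst : firstLevel x = x c := by
    by_cases hc : c ∈ nonFull x
    · exact firstLevel_eq hc fun j hj => (mem_singleton.1 (hsub hj)).ge
    · have hempty : ¬(nonFull x).Nonempty := fun ⟨j, hj⟩ => hc (mem_singleton.1 (hsub hj) ▸ hj)
      have := mem_nonFull.not.1 hc
      have := (x c).isLt
      rw [firstLevel, dif_neg hempty]
      omega
  rw [decode, if_neg hcard, hfirst]

theorem freeLevels_eq (h : IsFullExcept x c) : freeLevels x = q - 1 - x c :=
  sum_eq_single c (fun j _ hj => by have := h j hj; omega) (by simp)

theorem budget_eq (h : IsFullExcept x c) : budget x = (q - 1 - x c) / 2 := by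
  rw [budget, if_neg fun ⟨_, _, h'⟩ => h'.not_isFullExcept c h, if_pos ⟨c, h⟩,
    h.freeLevels_eq]

end IsFullExcept


theorem IsFullExcept.exists_write (hodd : q % 2 = 1) {c : Fin n} (h : IsFullExcept x c)
    (hW : 0 < budget x) (i : Fin 2) : ∃ y, IsWrite decode i x y ∧ budget x ≤ budget y + 1 := by
  rw [h.budget_eq] at hW
  fin_cases i
  · obtain ⟨v, hv⟩ : ∃ v : Fin q, (v : ℕ) = x c + if (x c : ℕ) % 2 = 0 then 1 else 3 :=
      ⟨⟨_, by split_ifs <;> omega⟩, rfl⟩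
    have hy := h.update_same v
    refine ⟨update x c v, isWrite_zero_of_parity h.decode_eq hy.decode_eq
      (le_update_self_iff.2 ?_) ?_ ?_, ?_⟩ <;>
      simp only [h.budget_eq, hy.budget_eq, update_self, Fin.le_def] <;>
      split_ifs at hv <;> omega
  · obtain ⟨v, hv⟩ : ∃ v : Fin q, (v : ℕ) = x c + 2 := ⟨⟨_, by omega⟩, rfl⟩
    have hy := h.update_same v
    refine ⟨update x c v, isWrite_one_of_parity h.decode_eq hy.decode_eq
      (le_update_self_iff.2 ?_) ?_ ?_, ?_⟩ <;>
      simp only [h.budget_eq, hy.budget_eq, update_self, Fin.le_def] <;>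
      omega

namespace IsTwoPointer

variable {l r : Fin n}

theorem exists_write_zero (hodd : q % 2 = 1) (h : IsTwoPointer x l r) (hW : 0 < budget x) :
    ∃ y, IsWrite decode 0 x y ∧ budget x ≤ budget y + 1 := by
  have hl := h.left_nonFull
  have hlr : (l : ℕ) < r := h.lt
  rw [h.budget_eq] at hW
  by_cases hsat : (x l : ℕ) + 2 < q
  · obtain ⟨v, hv⟩ : ∃ v : Fin q, (v : ℕ) = x l + 1 := ⟨⟨_, by omega⟩, rfl⟩
    have hy := h.update_left (v := v) (by omega)
    have hfree := freeLevels_update x l v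
    refine ⟨update x l v, isWrite_zero_of_parity h.decode_eq hy.decode_eq
      (le_update_self_iff.2 ?_) ?_ ?_, ?_⟩ <;>
      simp only [h.budget_eq, hy.budget_eq, update_self, update_of_ne h.lt.ne', Fin.le_def] <;>
      omega
  obtain ⟨v, hv⟩ : ∃ v : Fin q, (v : ℕ) + 1 = q := ⟨⟨q - 1, by omega⟩, by simp; omega⟩
  have hfree := freeLevels_update x l v
  by_cases hadj : (r : ℕ) = l + 1
  · -- the level of `r` is raised to `≡ 2 * (x r % 2) [MOD 4]`, so that it stores both bits
    have hx' := h.isFullExcept_update_left hadj hv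
    rw [hx'.freeLevels_eq, update_of_ne h.lt.ne'] at hfree
    obtain ⟨w, hw⟩ : ∃ w : Fin q, (w : ℕ) = x r + x r % 4 := ⟨⟨_, by omega⟩, rfl⟩
    have hy := hx'.update_same w
    refine ⟨update (update x l v) r w, isWrite_zero_of_parity h.decode_eq hy.decode_eq
      ((le_update_self_iff.2 ?_).trans (le_update_self_iff.2 ?_)) ?_ ?_, ?_⟩ <;>
      simp only [h.budget_eq, hy.budget_eq, update_self, update_of_ne h.lt.ne', Fin.le_def] <;>
      omega
  · obtain ⟨l', hl'⟩ : ∃ l' : Fin n, (l' : ℕ) = l + 1 := ⟨⟨_, by omega⟩, rfl⟩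
    have hy := h.fill_left hv hl' (by omega)
    have hzero := h.zero_of_between l' (by omega) (by omega)
    refine ⟨update x l v, isWrite_zero_of_parity h.decode_eq hy.decode_eq
      (le_update_self_iff.2 ?_) ?_ ?_, ?_⟩ <;>
      simp only [h.budget_eq, hy.budget_eq, update_of_ne h.lt.ne',
        update_of_ne (show l' ≠ l by omega), Fin.le_def] <;>
      omega

theorem exists_write_one (hodd : q % 2 = 1) (h : IsTwoPointer x l r) (hW : 0 < budget x) :
    ∃ y, IsWrite decode 1 x y ∧ budget x ≤ budget y + 1 := by
  have hr := h.right_nonFull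
  have hlr : (l : ℕ) < r := h.lt
  rw [h.budget_eq] at hW
  by_cases hsat : (x r : ℕ) + 2 < q
  · obtain ⟨v, hv⟩ : ∃ v : Fin q, (v : ℕ) = x r + 1 := ⟨⟨_, by omega⟩, rfl⟩
    have hy := h.update_right (v := v) (by omega)
    have hfree := freeLevels_update x r v
    refine ⟨update x r v, isWrite_one_of_parity h.decode_eq hy.decode_eq
      (le_update_self_iff.2 ?_) ?_ ?_, ?_⟩ <;>
      simp only [h.budget_eq, hy.budget_eq, update_self, update_of_ne h.lt.ne, Fin.le_def] <;>
      omega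
  obtain ⟨v, hv⟩ : ∃ v : Fin q, (v : ℕ) + 1 = q := ⟨⟨q - 1, by omega⟩, by simp; omega⟩
  have hfree := freeLevels_update x r v
  by_cases hadj : (r : ℕ) = l + 1
  · -- `l` now stores both bits; raising it by two if needed clears its second binary digit
    have hx' := h.isFullExcept_update_right hadj hv
    rw [hx'.freeLevels_eq, update_of_ne h.lt.ne] at hfree
    obtain ⟨w, hw⟩ : ∃ w : Fin q, (w : ℕ) = x l + 2 * (x l / 2 % 2) := ⟨⟨_, by omega⟩, rfl⟩
    have hy := hx'.update_same w
    refine ⟨update (update x r v) l w, isWrite_one_of_parity h.decode_eq hy.decode_eq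
      ((le_update_self_iff.2 ?_).trans (le_update_self_iff.2 ?_)) ?_ ?_, ?_⟩ <;>
      simp only [h.budget_eq, hy.budget_eq, update_self, update_of_ne h.lt.ne, Fin.le_def] <;>
      omega
  · obtain ⟨r', hr'⟩ : ∃ r' : Fin n, (r' : ℕ) + 1 = r := ⟨⟨r - 1, by omega⟩, by simp; omega⟩
    have hy := h.fill_right hv hr' (by omega)
    have hzero := h.zero_of_between r' (by omega) (by omega)
    refine ⟨update x r v, isWrite_one_of_parity h.decode_eq hy.decode_eq
      (le_update_self_iff.2 ?_) ?_ ?_, ?_⟩ <;>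
      simp only [h.budget_eq, hy.budget_eq, update_of_ne h.lt.ne,
        update_of_ne (show r' ≠ r by omega), Fin.le_def] <;>
      omega

end IsTwoPointer

theorem exists_write (hodd : q % 2 = 1) (hW : 0 < budget x) (i : Fin 2) :
    ∃ y, IsWrite decode i x y ∧ budget x ≤ budget y + 1 := by
  by_cases hx : ∃ l r, IsTwoPointer x l r
  · obtain ⟨l, r, h⟩ := hx
    fin_cases i
    · exact h.exists_write_zero hodd hW
    · exact h.exists_write_one hodd hW
  by_cases hx' : ∃ c, IsFullExcept x c
  · obtain ⟨c, h⟩ := hx'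
    exact h.exists_write hodd hW i
  · rw [budget, if_neg hx, if_neg hx'] at hW
    exact absurd hW (lt_irrefl 0)

theorem isTwoPointer_of_zero (hq : 1 < q) (hn : 2 ≤ n) (hx : ∀ j, (x j : ℕ) = 0) :
    IsTwoPointer x ⟨0, by omega⟩ ⟨n - 1, by omega⟩ where
  lt := Fin.mk_lt_mk.2 (by omega)
  left_nonFull := by rw [hx]; omega
  right_nonFull := by rw [hx]; omega
  full_of_lt j hj := by
    have : (j : ℕ) < 0 := hj
    omega
  full_of_gt j hj := by
    have : n - 1 < (j : ℕ) := hj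
    omega
  zero_of_between j _ _ := hx j

theorem decode_of_zero (hq : 1 < q) (hn : 2 ≤ n) (hx : ∀ j, (x j : ℕ) = 0) :
    decode x = fun _ => false := by
  rw [(isTwoPointer_of_zero hq hn hx).decode_eq, hx, hx]
  ext i
  fin_cases i <;> rfl

theorem le_budget_of_zero (hq : 1 < q) (hn : 2 ≤ n) (hx : ∀ j, (x j : ℕ) = 0) :
    (n - 1) * (q - 1) + (q - 1) / 2 ≤ budget x := by
  have hfree : freeLevels x = (n - 1) * (q - 1) + (q - 1) := by
    rw [← Nat.succ_mul, Nat.succ_eq_add_one, Nat.sub_add_cancel (by omega)]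
    simp [freeLevels, hx]
  rw [(isTwoPointer_of_zero hq hn hx).budget_eq, hfree]
  omega

end TwoBitCode

/-- For odd `q ≥ 3` and `n ≥ 2`, there exists an `(n,2)_q` flash code guaranteeing at least
`t = (n-1)(q-1) + ⌊(q-1)/2⌋` writes before a block erasure. -/
theorem exists_two_bit_flash_code
    (n q : ℕ) (hq : 3 ≤ q) (hodd : Odd q) (hn : 2 ≤ n) :
    ∃ (D : (Fin n → Fin q) → (Fin 2 → Bool))
      (E : Fin 2 → (Fin n → Fin q) → Option (Fin n → Fin q)),
      IsFlashCode D E ∧ Guarantees E ((n - 1) * (q - 1) + (q - 1) / 2) := by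
  have hq₁ : 1 < q := by omega
  obtain ⟨E, hE, hguar⟩ := exists_isFlashCode_guarantees_of_budget TwoBitCode.decode
    TwoBitCode.budget _ (fun _ hx => TwoBitCode.decode_of_zero hq₁ hn hx)
    (fun _ hx => TwoBitCode.le_budget_of_zero hq₁ hn hx)
    (fun _ i hx => TwoBitCode.exists_write (Nat.odd_iff.1 hodd) hx i)
  exact ⟨_, E, hE, hguar⟩
end

section
/- Let ℓ ≥ 2, r ≥ 1, and q ≥ ℓ^r be integers. Then ⌊(q − ℓ^r)·r / (∑_{d ∣ r} φ(r/d)·ℓ^d)⌋ + r ≤ ⌊(q−1)/(ℓ^r − 1)⌋·r + ⌊log_ℓ(((q−1) mod (ℓ^r − 1)) + 1)⌋, where φ is Euler's totient function, the sum ranges over positive divisors d of r, and log_ℓ denotes the integer logarithm base ℓ (⌊log_ℓ m⌋ is the largest e with ℓ^e ≤ m). That is, the new upper bound on the number of writes of a single-cell buffer code is at most the previously known upper bound. -/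
/-!
The divisor sum is at least its term `d = r`, namely `ℓ^r`, so it suffices to bound
`⌊n r / ℓ^r⌋` with `n = q - ℓ^r`. Writing `n = m (ℓ^r - 1) + s` with `s < ℓ^r - 1` and
`e = ⌊log_ℓ (s + 1)⌋`, the part `m (ℓ^r - 1)` contributes at most `m r`, while
`s r < ℓ^(e+1) r ≤ (e + 1) ℓ^r` because `j ↦ ℓ^j / j` is nondecreasing for `ℓ ≥ 2`.
Finally `q - 1 = n + (ℓ^r - 1)` turns `⌊n / (ℓ^r - 1)⌋ r + r` into `⌊(q-1)/(ℓ^r-1)⌋ r`.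
-/

lemma pow_le_sum_totient_mul_pow (l : ℕ) {r : ℕ} (hr : r ≠ 0) :
    l ^ r ≤ ∑ d ∈ r.divisors, Nat.totient (r / d) * l ^ d := by
  calc l ^ r = Nat.totient (r / r) * l ^ r := by
        rw [Nat.div_self (Nat.pos_of_ne_zero hr), Nat.totient_one, one_mul]
    _ ≤ _ := Finset.single_le_sum (f := fun d => Nat.totient (r / d) * l ^ d)
        (fun _ _ => Nat.zero_le _) (Nat.mem_divisors_self r hr)

lemma mul_pow_le_mul_pow {l j r : ℕ} (hl : 2 ≤ l) (hj : 1 ≤ j) (hjr : j ≤ r) :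
    r * l ^ j ≤ j * l ^ r := by
  induction r, hjr using Nat.le_induction with
  | base => exact le_rfl
  | succ n hn ih =>
    have hpow : l ^ j ≤ j * l ^ n :=
      (Nat.pow_le_pow_right (by omega) hn).trans (Nat.le_mul_of_pos_left _ hj)
    calc (n + 1) * l ^ j = n * l ^ j + l ^ j := by ring
      _ ≤ j * l ^ n * 2 := by omega
      _ ≤ j * l ^ n * l := Nat.mul_le_mul_left _ hl
      _ = j * l ^ (n + 1) := by ring

lemma mul_lt_succ_log_mul_pow {l r s : ℕ} (hl : 2 ≤ l) (hs : s + 1 < l ^ r) :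
    s * r < (Nat.log l (s + 1) + 1) * l ^ r := by
  have hlog : Nat.log l (s + 1) + 1 ≤ r := Nat.log_lt_of_lt_pow (by omega) hs
  have hsucc : s + 1 < l ^ (Nat.log l (s + 1) + 1) := Nat.lt_pow_succ_log_self hl _
  have hr : 0 < r := by omega
  calc s * r < l ^ (Nat.log l (s + 1) + 1) * r := Nat.mul_lt_mul_of_pos_right (by omega) hr
    _ = r * l ^ (Nat.log l (s + 1) + 1) := Nat.mul_comm _ _
    _ ≤ (Nat.log l (s + 1) + 1) * l ^ r := mul_pow_le_mul_pow hl (by omega) hlog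

lemma mul_div_pow_le_div_mul_add_log {l r : ℕ} (hl : 2 ≤ l) (n : ℕ) :
    n * r / l ^ r ≤ n / (l ^ r - 1) * r + Nat.log l (n % (l ^ r - 1) + 1) := by
  rcases Nat.eq_zero_or_pos r with rfl | hr
  · simp
  set m := n / (l ^ r - 1)
  set s := n % (l ^ r - 1)
  have hlr : 1 < l ^ r := Nat.one_lt_pow (by omega) (by omega)
  have hM : 0 < l ^ r - 1 := by omega
  have hs : s + 1 < l ^ r := by have := Nat.mod_lt n hM; omega
  have hn : n = m * (l ^ r - 1) + s := (Nat.div_add_mod' n _).symm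
  have hlt : n * r < (m * r + Nat.log l (s + 1) + 1) * l ^ r := by
    have hm : m * (l ^ r - 1) * r ≤ m * r * l ^ r := by
      rw [Nat.mul_right_comm]; exact Nat.mul_le_mul_left _ (Nat.sub_le _ _)
    have := mul_lt_succ_log_mul_pow hl hs
    calc n * r = m * (l ^ r - 1) * r + s * r := by rw [hn, Nat.add_mul]
      _ < m * r * l ^ r + (Nat.log l (s + 1) + 1) * l ^ r := by omega
      _ = (m * r + Nat.log l (s + 1) + 1) * l ^ r := by ring
  exact Nat.lt_succ_iff.mp ((Nat.div_lt_iff_lt_mul (by omega)).mpr hlt)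

/-- The new upper bound on the number of writes of a single-cell buffer code is at most
the previously known upper bound: for `ℓ ≥ 2`, `r ≥ 1`, `q ≥ ℓ^r`,
`⌊(q - ℓ^r)·r / (∑_{d ∣ r} φ(r/d)·ℓ^d)⌋ + r ≤ ⌊(q-1)/(ℓ^r-1)⌋·r + ⌊log_ℓ(((q-1) mod (ℓ^r-1)) + 1)⌋`. -/
theorem buffer_bound_improves
    (l r q : ℕ) (hl : 2 ≤ l) (hr : 1 ≤ r) (hq : l ^ r ≤ q) :
    (q - l ^ r) * r / (∑ d ∈ r.divisors, Nat.totient (r / d) * l ^ d) + r ≤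
      (q - 1) / (l ^ r - 1) * r + Nat.log l ((q - 1) % (l ^ r - 1) + 1) := by
  have hlr : 1 < l ^ r := Nat.one_lt_pow (by omega) (by omega)
  have hq1 : q - 1 = (q - l ^ r) + (l ^ r - 1) := by omega
  rw [hq1, Nat.add_div_right _ (by omega), Nat.add_mod_right]
  calc (q - l ^ r) * r / (∑ d ∈ r.divisors, Nat.totient (r / d) * l ^ d) + r
      ≤ (q - l ^ r) * r / l ^ r + r := by
        gcongr
        exact pow_le_sum_totient_mul_pow l (by omega)
    _ ≤ (q - l ^ r) / (l ^ r - 1) * r + Nat.log l ((q - l ^ r) % (l ^ r - 1) + 1) + r := by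
        gcongr; exact mul_div_pow_le_div_mul_add_log hl _
    _ = _ := by ring
end

section
/- Let ℓ ≥ 2 and r ≥ 1 be integers, and let z be an integer with 1 ≤ z ≤ ℓ^r. Then ⌊z·r / ℓ^r⌋ ≤ ⌊log_ℓ z⌋, where ⌊log_ℓ z⌋ is the largest natural number e with ℓ^e ≤ z. -/
/-!
Put `k = ⌊z r / ℓ^r⌋`, so that `k ℓ^r ≤ z r` and, as `z ≤ ℓ^r`, `k ≤ r`. For `1 ≤ k ≤ r` the
sequence `ℓ^n / n` is nondecreasing between `k` and `r`, i.e. `r ℓ^k ≤ k ℓ^r`, because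
`r ≤ k (r - k + 1) ≤ k ℓ^(r-k)`. Hence `r ℓ^k ≤ z r`, so `ℓ^k ≤ z` and `k ≤ ⌊log_ℓ z⌋`.
-/

namespace Nat

theorem mul_pow_le_mul_pow_of_le {l k r : ℕ} (hl : 2 ≤ l) (hk : 0 < k) (hkr : k ≤ r) :
    r * l ^ k ≤ k * l ^ r := by
  obtain ⟨d, rfl⟩ := Nat.exists_eq_add_of_le hkr
  have hd : d + 1 ≤ l ^ d := Nat.lt_pow_self hl
  calc (k + d) * l ^ k ≤ k * (d + 1) * l ^ k := by gcongr; nlinarith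
    _ ≤ k * l ^ d * l ^ k := by gcongr
    _ = k * l ^ (k + d) := by ring

end Nat

theorem div_le_log_general
    (l r z : ℕ) (hl : 2 ≤ l) (hz2 : z ≤ l ^ r) :
    z * r / l ^ r ≤ Nat.log l z := by
  set k := z * r / l ^ r
  rcases Nat.eq_zero_or_pos k with hk0 | hk
  · exact hk0 ▸ Nat.zero_le _
  have hkr : k ≤ r := Nat.div_le_of_le_mul (Nat.mul_le_mul_right r hz2)
  have hr : 0 < r := hk.trans_le hkr
  have hz : z ≠ 0 := by rintro rfl; simp [k] at hk
  rw [Nat.le_log_iff_pow_le hl hz]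
  refine Nat.le_of_mul_le_mul_left ?_ hr
  calc r * l ^ k ≤ k * l ^ r := Nat.mul_pow_le_mul_pow_of_le hl hk hkr
    _ ≤ z * r := Nat.div_mul_le_self _ _
    _ = r * z := Nat.mul_comm _ _

/-- For `ℓ ≥ 2`, `r ≥ 1` and `1 ≤ z ≤ ℓ^r`: `⌊z·r / ℓ^r⌋ ≤ ⌊log_ℓ z⌋`. -/
theorem div_le_log
    (l r z : ℕ) (hl : 2 ≤ l) (hr : 1 ≤ r) (hz1 : 1 ≤ z) (hz2 : z ≤ l ^ r) :
    z * r / l ^ r ≤ Nat.log l z :=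
  div_le_log_general l r z hl hz2
end
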